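/- Let 𝒜 be a relational structure over τ with universe A, let 𝒜_V be a view structure for 𝒜, and let O ⊆ A be nonempty. If there exists a core 𝒜' of 𝒜 ⊎ ⨄_{X∈O} 𝕊_{{X}} such that (ℋ_{𝒜'}, ℋ_{𝒜_V}) has a tree projection, then for every X ∈ O the singleton {X} is tp-covered in 𝒜_V, i.e., there exists a core 𝒜'' of 𝒜 ⊎ 𝕊_{{X}} such that (ℋ_{𝒜''}, ℋ_{𝒜_V}) has a tree projection. -/

import Mathlib

open Set

/-- A relational structure over vocabulary `σ` (with arities `ar`) and universe `A`. -/
structure RelStruct (σ : Type) (ar : σ → ℕ) (A : Type) where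
  rel : ∀ R : σ, Set (Fin (ar R) → A)

variable {σ : Type} {ar : σ → ℕ} {A B : Type}

/-- `h` is a homomorphism from `𝒜` to `ℬ`. -/
def IsHom (𝒜 : RelStruct σ ar A) (ℬ : RelStruct σ ar B) (h : A → B) : Prop :=
  ∀ R : σ, ∀ t ∈ 𝒜.rel R, (fun i => h (t i)) ∈ ℬ.rel R

/-- `𝒜^ℬ[X]`: the set of restrictions to `X` of homomorphisms from `𝒜` to `ℬ`. -/
def homRestrict (𝒜 : RelStruct σ ar A) (ℬ : RelStruct σ ar B) (X : Set A) :
    Set (↥X → B) :=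
  { g | ∃ h : A → B, IsHom 𝒜 ℬ h ∧ g = X.restrict h }

/-- `𝒜'` is a (relation-wise) substructure of `𝒜`. -/
def SubStructOf (𝒜' 𝒜 : RelStruct σ ar A) : Prop :=
  ∀ R : σ, 𝒜'.rel R ⊆ 𝒜.rel R

/-- `𝒜'` is a core of `𝒜`. -/
def IsCoreOf (𝒜' 𝒜 : RelStruct σ ar A) : Prop :=
  SubStructOf 𝒜' 𝒜 ∧ (∃ h : A → A, IsHom 𝒜 𝒜' h) ∧
    ∀ 𝒜'' : RelStruct σ ar A, SubStructOf 𝒜'' 𝒜' → 𝒜'' ≠ 𝒜' →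
      ¬ ∃ h : A → A, IsHom 𝒜 𝒜'' h

/-- `X` is domain restricted in `𝒜`, with (unary) domain-constraint symbol `dR`. -/
def DomRestricted (𝒜 : RelStruct σ ar A) (dR : σ) (X : A) : Prop :=
  ar dR = 1 ∧ 𝒜.rel dR = {fun _ => X}

/-- A view structure (v-structure) for `𝒜`, over the vocabulary `ν` of views:
each view `v` has a set of variables (the entries of its single defining tuple),
and every constraint of `𝒜` has a base view. -/
structure ViewStruct (σ : Type) (ar : σ → ℕ) (A : Type) (𝒜 : RelStruct σ ar A)
    (ν : Type) where
  vars : ν → Set A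
  base : ∀ R : σ, ∀ t : Fin (ar R) → A, t ∈ 𝒜.rel R → ν
  base_vars : ∀ R t ht, vars (base R t ht) = Set.range t

variable {ν : Type} {𝒜 : RelStruct σ ar A}

/-- Restriction of an assignment on `W` to a subset `S ⊆ W`. -/
def restr {W S : Set A} (hSW : S ⊆ W) (g : ↥W → B) : ↥S → B :=
  fun x => g ⟨x.1, hSW x.2⟩

/-- `BV` (a τ_V-structure, given as a set of assignments for each view) is legal
w.r.t. `V` and the instance `(𝒜,ℬ)`. -/
def Legal (𝒜 : RelStruct σ ar A) (ℬ : RelStruct σ ar B)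
    (V : ViewStruct σ ar A 𝒜 ν) (BV : ∀ v : ν, Set (↥(V.vars v) → B)) : Prop :=
  (∀ v : ν, homRestrict 𝒜 ℬ (V.vars v) ⊆ BV v) ∧
  (∀ (R : σ) (t : Fin (ar R) → A) (ht : t ∈ 𝒜.rel R),
     ∀ g ∈ BV (V.base R t ht),
       (fun i => g ⟨t i, by rw [V.base_vars]; exact Set.mem_range_self i⟩) ∈ ℬ.rel R)

/-- Pairwise consistency of a family of view relations w.r.t. `V`. -/
def PWConsistent (V : ViewStruct σ ar A 𝒜 ν)
    (BV' : ∀ v : ν, Set (↥(V.vars v) → B)) : Prop :=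
  ∀ v1 v2 : ν, (V.vars v1 ∩ V.vars v2).Nonempty →
    restr Set.inter_subset_left '' BV' v1 = restr Set.inter_subset_right '' BV' v2

/-- `GAC V BV`: the largest pairwise consistent sub-structure of `BV`
(defined as the union of all pairwise consistent sub-structures). -/
def GAC (V : ViewStruct σ ar A 𝒜 ν) (BV : ∀ v : ν, Set (↥(V.vars v) → B)) :
    ∀ v : ν, Set (↥(V.vars v) → B) :=
  fun v => { g | ∃ BV' : ∀ w : ν, Set (↥(V.vars w) → B),
    (∀ w, BV' w ⊆ BV w) ∧ PWConsistent V BV' ∧ g ∈ BV' v }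

/-- `h` is a homomorphism from the v-structure `𝒜_V` to `ℬ_V` (reading the single
tuple of each view as an assignment). -/
def IsViewHom (V : ViewStruct σ ar A 𝒜 ν) (BV : ∀ v : ν, Set (↥(V.vars v) → B))
    (h : A → B) : Prop :=
  ∀ v : ν, (V.vars v).restrict h ∈ BV v

/-- The hyperedges of the hypergraph `ℋ_𝒜` of a structure `𝒜`. -/
def structEdges (𝒜 : RelStruct σ ar A) : Set (Set A) :=
  { e | ∃ (R : σ) (t : Fin (ar R) → A), t ∈ 𝒜.rel R ∧ e = Set.range t }

/-- The hyperedges of the hypergraph `ℋ_{𝒜_V}` of a v-structure. -/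
def viewEdges (V : ViewStruct σ ar A 𝒜 ν) : Set (Set A) := Set.range V.vars

/-- `H1 ≤ H2`: every hyperedge of `H1` is contained in some hyperedge of `H2`. -/
def HypLE (H1 H2 : Set (Set A)) : Prop := ∀ e ∈ H1, ∃ e' ∈ H2, e ⊆ e'

/-- `T` is a join tree of the hypergraph with hyperedges `H`. -/
def IsJoinTree (H : Set (Set A)) (T : SimpleGraph ↥H) : Prop :=
  T.IsTree ∧ ∀ (X : A) (e1 e2 : ↥H), X ∈ (e1 : Set A) → X ∈ (e2 : Set A) →
    ∀ p : T.Walk e1 e2, p.IsPath → ∀ e ∈ p.support, X ∈ (e : Set A)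

/-- A hypergraph is acyclic iff it has a join tree. -/
def AcyclicHyp (H : Set (Set A)) : Prop := ∃ T : SimpleGraph ↥H, IsJoinTree H T

/-- `(H1, H2)` has a tree projection. -/
def HasTreeProjection (H1 H2 : Set (Set A)) : Prop :=
  ∃ Ha : Set (Set A), AcyclicHyp Ha ∧ HypLE H1 Ha ∧ HypLE Ha H2

/-- `𝒜 ⊎ 𝕊_O`, where the single tuple `t` (of length `r`) enumerates `O`. -/
def addRel (𝒜 : RelStruct σ ar A) (r : ℕ) (t : Fin r → A) :
    RelStruct (σ ⊕ Unit) (Sum.elim ar fun _ => r) A where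
  rel := fun R => match R with
    | Sum.inl R => 𝒜.rel R
    | Sum.inr _ => {t}

/-- `𝒜 ⊎ ⨄_{X ∈ O} 𝕊_{{X}}`. -/
def addSingles (𝒜 : RelStruct σ ar A) (O : Set A) :
    RelStruct (σ ⊕ ↥O) (Sum.elim ar fun _ => 1) A where
  rel := fun R => match R with
    | Sum.inl R => 𝒜.rel R
    | Sum.inr X => {fun _ => (X : A)}

/-- `O` is tp-covered in the v-structure `V`. -/
def TpCovered (V : ViewStruct σ ar A 𝒜 ν) (O : Set A) : Prop :=
  ∃ (r : ℕ) (t : Fin r → A), Function.Injective t ∧ Set.range t = O ∧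
    ∃ 𝒜' : RelStruct (σ ⊕ Unit) (Sum.elim ar fun _ => r) A,
      IsCoreOf 𝒜' (addRel 𝒜 r t) ∧
      HasTreeProjection (structEdges 𝒜') (viewEdges V)

/-- The assignments on `W` that satisfy all constraints of `𝒜` whose variables
all lie in `W` (interpreted in `ℬ`). -/
def solsOn (𝒜 : RelStruct σ ar A) (ℬ : RelStruct σ ar B) (W : Set A) :
    Set (↥W → B) :=
  { g | ∀ (R : σ) (t : Fin (ar R) → A), t ∈ 𝒜.rel R →
      ∀ hsub : ∀ i, t i ∈ W, (fun i => g ⟨t i, hsub i⟩) ∈ ℬ.rel R }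

/-- The constraints of `𝒜`. -/
def Cst (𝒜 : RelStruct σ ar A) : Type := Σ R : σ, {t : Fin (ar R) → A // t ∈ 𝒜.rel R}

/-- The variables of a constraint. -/
def cstVars (c : Cst 𝒜) : Set A := Set.range c.2.1

/-- Index type for the views of `ℓ-tw_k`: the nonempty sets of at most `k` variables. -/
def twIdx (A : Type) (k : ℕ) : Type := {W : Set A // W.Nonempty ∧ W.Finite ∧ W.ncard ≤ k}

/-- The v-structure `ℓ-tw_k(𝒜)`. -/
def twViews (𝒜 : RelStruct σ ar A) (k : ℕ) :
    ViewStruct σ ar A 𝒜 (twIdx A k ⊕ Cst 𝒜) where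
  vars := Sum.elim (fun W => W.1) cstVars
  base := fun R t ht => Sum.inr ⟨R, ⟨t, ht⟩⟩
  base_vars := fun _ _ _ => rfl

/-- The legal structure `r-tw_k(𝒜,ℬ)`. -/
def rtw (𝒜 : RelStruct σ ar A) (ℬ : RelStruct σ ar B) (k : ℕ) :
    ∀ v : twIdx A k ⊕ Cst 𝒜, Set (↥((twViews 𝒜 k).vars v) → B) :=
  fun v => solsOn 𝒜 ℬ ((twViews 𝒜 k).vars v)

/-- Index type for the views of `ℓ-hw_k`: nonempty sets of at most `k` constraints. -/
def hwIdx (𝒜 : RelStruct σ ar A) (k : ℕ) : Type :=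
  {C : Finset (Cst 𝒜) // C.Nonempty ∧ C.card ≤ k}

/-- The variables occurring in a set of constraints. -/
def hwVars (C : Finset (Cst 𝒜)) : Set A := ⋃ c ∈ C, cstVars c

/-- The v-structure `ℓ-hw_k(𝒜)` (for `k ≥ 1`). -/
def hwViews (𝒜 : RelStruct σ ar A) (k : ℕ) (hk : 1 ≤ k) :
    ViewStruct σ ar A 𝒜 (hwIdx 𝒜 k) where
  vars := fun C => hwVars C.1
  base := fun R t ht => ⟨{⟨R, ⟨t, ht⟩⟩}, Finset.singleton_nonempty _, (Finset.card_singleton (α := Cst 𝒜) _).trans_le hk⟩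
  base_vars := fun R t ht => Set.ext fun x => by
    simp only [hwVars, cstVars, Set.mem_iUnion]
    constructor
    · rintro ⟨c, hc, h⟩; obtain rfl := Finset.mem_singleton.mp hc; exact h
    · intro h; exact ⟨_, Finset.mem_singleton_self (α := Cst 𝒜) ⟨R, ⟨t, ht⟩⟩, h⟩

/-- The legal structure `r-hw_k(𝒜,ℬ)`: each view holds the solutions of its subproblem. -/
def rhw (𝒜 : RelStruct σ ar A) (ℬ : RelStruct σ ar B) (k : ℕ) (hk : 1 ≤ k) :
    ∀ C : hwIdx 𝒜 k, Set (↥((hwViews 𝒜 k hk).vars C) → B) :=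
  fun C => { g | ∀ (c : Cst 𝒜) (hc : c ∈ C.1),
    (fun i => g ⟨c.2.1 i, Set.mem_iUnion₂.mpr ⟨c, hc, Set.mem_range_self i⟩⟩) ∈ ℬ.rel c.1 }

/-- Replace the relation of symbol `dR` in `ℬ` by `s`. -/
noncomputable def replaceRel (ℬ : RelStruct σ ar B) (dR : σ)
    (s : Set (Fin (ar dR) → B)) : RelStruct σ ar B :=
  letI := Classical.decEq σ
  ⟨Function.update ℬ.rel dR s⟩

/-- Replace the relation of view `v0` by `s`. -/
noncomputable def updateView (V : ViewStruct σ ar A 𝒜 ν)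
    (BV : ∀ v : ν, Set (↥(V.vars v) → B)) (v0 : ν) (s : Set (↥(V.vars v0) → B)) :
    ∀ v : ν, Set (↥(V.vars v) → B) :=
  letI := Classical.decEq ν
  Function.update BV v0 s

/-- The Gaifman graph of a structure. -/
def gaifman (𝒜 : RelStruct σ ar A) : SimpleGraph A where
  Adj u v := u ≠ v ∧ ∃ (R : σ) (t : Fin (ar R) → A),
      t ∈ 𝒜.rel R ∧ u ∈ Set.range t ∧ v ∈ Set.range t
  symm := ⟨fun u v h => ⟨h.1.symm, by obtain ⟨-, R, t, ht, hu, hv⟩ := h; exact ⟨R, t, ht, hv, hu⟩⟩⟩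
  loopless := ⟨fun u h => h.1 rfl⟩

/-- The `m × n` grid graph. -/
def gridGraph (m n : ℕ) : SimpleGraph (Fin m × Fin n) where
  Adj u v := Nat.dist u.1.1 v.1.1 + Nat.dist u.2.1 v.2.1 = 1
  symm := by constructor; intro u v h; simpa [Nat.dist_comm] using h
  loopless := by constructor; intro u h; simp [Nat.dist_self] at h

/-- Two nodes share a hyperedge of `H`. -/
def sharesEdge (H : Set (Set A)) (u w : A) : Prop := ∃ e ∈ H, u ∈ e ∧ w ∈ e

/-- The hypergraph with hyperedges `H` is connected (over the whole universe). -/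
def HypConnected (H : Set (Set A)) : Prop :=
  ∀ x y : A, Relation.ReflTransGen (sharesEdge H) x y

/-! Reducing the core `𝒜'` of `𝒜 ⊎ ⨄_{X ∈ O} 𝕊_{{X}}` to the `τ`-relations and the relation of
one `X` gives a substructure of `𝒜 ⊎ 𝕊_{{X}}` to which the homomorphism onto `𝒜'` restricts.
A substructure minimal among those receiving a homomorphism, which exists by finiteness, is then
a core of `𝒜 ⊎ 𝕊_{{X}}`. Its hyperedges are hyperedges of `𝒜'`, so the tree projection of
`(ℋ_{𝒜'}, ℋ_{𝒜_V})` serves it as well. -/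

namespace RelStruct

theorem rel_injective : Function.Injective (rel : RelStruct σ ar A → _) := by
  rintro ⟨⟩ ⟨⟩ h
  cases h
  rfl

def keepInr {ι : Type} {κ : ι → ℕ} (𝒜 : RelStruct (σ ⊕ ι) (Sum.elim ar κ) A) (i : ι) :
    RelStruct (σ ⊕ Unit) (Sum.elim ar fun _ => κ i) A where
  rel := fun R => match R with
    | Sum.inl R => 𝒜.rel (Sum.inl R)
    | Sum.inr _ => 𝒜.rel (Sum.inr i)

end RelStruct

open RelStruct

section Reduct

variable {ι : Type} {κ : ι → ℕ}

theorem SubStructOf.keepInr {𝒜' ℬ : RelStruct (σ ⊕ ι) (Sum.elim ar κ) A}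
    (hsub : SubStructOf 𝒜' ℬ) (i : ι) : SubStructOf (𝒜'.keepInr i) (ℬ.keepInr i)
  | Sum.inl R => hsub (Sum.inl R)
  | Sum.inr _ => hsub (Sum.inr i)

theorem IsHom.keepInr {ℬ : RelStruct (σ ⊕ ι) (Sum.elim ar κ) A}
    {𝒞 : RelStruct (σ ⊕ ι) (Sum.elim ar κ) B} {h : A → B}
    (hh : IsHom ℬ 𝒞 h) (i : ι) : IsHom (ℬ.keepInr i) (𝒞.keepInr i) h
  | Sum.inl R => hh (Sum.inl R)
  | Sum.inr _ => hh (Sum.inr i)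

theorem structEdges_keepInr_subset (𝒜' : RelStruct (σ ⊕ ι) (Sum.elim ar κ) A) (i : ι) :
    structEdges (𝒜'.keepInr i) ⊆ structEdges 𝒜' := by
  rintro e ⟨R | _, t, ht, rfl⟩
  · exact ⟨Sum.inl R, t, ht, rfl⟩
  · exact ⟨Sum.inr i, t, ht, rfl⟩

end Reduct

theorem addSingles_keepInr (𝒜 : RelStruct σ ar A) (O : Set A) (X : O) :
    (addSingles 𝒜 O).keepInr X = addRel 𝒜 1 fun _ => X :=
  rel_injective <| funext fun R => by cases R <;> rfl

theorem structEdges_mono {𝒟 𝒞 : RelStruct σ ar A}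
    (hsub : SubStructOf 𝒟 𝒞) : structEdges 𝒟 ⊆ structEdges 𝒞 := by
  rintro e ⟨R, t, ht, rfl⟩
  exact ⟨R, t, hsub R ht, rfl⟩

theorem HasTreeProjection.of_subset {H₁ H₁' H₂ : Set (Set A)} (hH : H₁ ⊆ H₁')
    (htp : HasTreeProjection H₁' H₂) : HasTreeProjection H₁ H₂ := by
  obtain ⟨Ha, hac, hle₁, hle₂⟩ := htp
  exact ⟨Ha, hac, fun e he => hle₁ e (hH he), hle₂⟩

theorem exists_isCoreOf_subStructOf [Finite σ] [Finite A] {ℬ 𝒜₀ : RelStruct σ ar A}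
    (hsub : SubStructOf 𝒜₀ ℬ) (hhom : ∃ h : A → A, IsHom ℬ 𝒜₀ h) :
    ∃ 𝒞 : RelStruct σ ar A, IsCoreOf 𝒞 ℬ ∧ SubStructOf 𝒞 𝒜₀ := by
  have hwf : WellFounded fun 𝒟 𝒞 : RelStruct σ ar A => 𝒟.rel < 𝒞.rel :=
    InvImage.wf _ wellFounded_lt
  obtain ⟨𝒞, ⟨hC₀, hChom⟩, hmin⟩ :=
    hwf.has_min {𝒞 | SubStructOf 𝒞 𝒜₀ ∧ ∃ h : A → A, IsHom ℬ 𝒞 h} ⟨𝒜₀, fun _ => le_rfl, hhom⟩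
  refine ⟨𝒞, ⟨fun R => (hC₀ R).trans (hsub R), hChom, ?_⟩, hC₀⟩
  intro 𝒟 hD hne hDhom
  exact hmin 𝒟 ⟨fun R => (hD R).trans (hC₀ R), hDhom⟩
    (lt_of_le_of_ne hD (rel_injective.ne hne))

theorem tpCovered_singleton {V : ViewStruct σ ar A 𝒜 ν} {X : A}
    (h : ∃ 𝒜' : RelStruct (σ ⊕ Unit) (Sum.elim ar fun _ => 1) A,
      IsCoreOf 𝒜' (addRel 𝒜 1 fun _ => X) ∧ HasTreeProjection (structEdges 𝒜') (viewEdges V)) :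
    TpCovered V {X} :=
  ⟨1, fun _ => X, fun i j _ => Subsingleton.elim i j, Set.range_const, h⟩

theorem statement9_general [Finite σ] [Finite A]
    (𝒜 : RelStruct σ ar A)
    (V : ViewStruct σ ar A 𝒜 ν)
    (O : Set A)
    (hcore : ∃ 𝒜' : RelStruct (σ ⊕ ↥O) (Sum.elim ar fun _ => 1) A,
        IsCoreOf 𝒜' (addSingles 𝒜 O) ∧
        HasTreeProjection (structEdges 𝒜') (viewEdges V)) :
    ∀ X ∈ O, TpCovered V {X} := by
  obtain ⟨𝒜', ⟨hsub, ⟨h, hh⟩, -⟩, htp⟩ := hcore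
  intro X hX
  have hreduct := addSingles_keepInr 𝒜 O ⟨X, hX⟩
  obtain ⟨𝒞, h𝒞, h𝒞sub⟩ := exists_isCoreOf_subStructOf (hreduct ▸ hsub.keepInr ⟨X, hX⟩)
    ⟨h, hreduct ▸ hh.keepInr ⟨X, hX⟩⟩
  exact tpCovered_singleton ⟨𝒞, h𝒞,
    htp.of_subset ((structEdges_mono h𝒞sub).trans (structEdges_keepInr_subset 𝒜' _))⟩

/-- if some core of `𝒜 ⊎ ⨄_{X ∈ O} 𝕊_{{X}}` has a tree projection
w.r.t. `ℋ_{𝒜_V}`, then every singleton `{X}` with `X ∈ O` is tp-covered in `𝒜_V`. -/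
theorem statement9 [Finite σ] [Finite A] [Finite ν]
    (𝒜 : RelStruct σ ar A) (har : ∀ R : σ, 1 ≤ ar R)
    (V : ViewStruct σ ar A 𝒜 ν)
    (O : Set A) (hO : O.Nonempty)
    (hcore : ∃ 𝒜' : RelStruct (σ ⊕ ↥O) (Sum.elim ar fun _ => 1) A,
        IsCoreOf 𝒜' (addSingles 𝒜 O) ∧
        HasTreeProjection (structEdges 𝒜') (viewEdges V)) :
    ∀ X ∈ O, TpCovered V {X} :=
  statement9_general 𝒜 V O hcore
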